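/- arXiv:2312.12031 — 4 statements merged into one kernel-verified Lean document; each statement's English description precedes it below -/
import Mathlib

section
/- Let X be a locally compact Hausdorff totally disconnected topological space, let Z ⊆ X be a closed subset equipped with the subspace topology, and let R be a commutative ring. For every locally constant function f : Z → R with compact support there exists a locally constant function g : X → R with compact support such that g(z) = f(z) for all z ∈ Z. In other words, the restriction map C_c^∞(X,R) → C_c^∞(Z,R) is surjective. -/
/-!
A locally constant compactly supported `f` takes finitely many values, and each fiber
`f ⁻¹' {c}` with `c ≠ 0` is compact and open in `Z`, hence of the form `U ∩ Z` with `U` open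
in `X`. Since compact clopen sets form a basis of `X`, this compact set lies in a compact
clopen `B c ⊆ U`, and then `B c ∩ Z` is exactly the fiber. The extension is
`∑ c, c • 𝟙_{B c}`.
-/

open Set Function

section LocallyConstant

variable {X R : Type*} [TopologicalSpace X] {f : X → R}

lemma IsLocallyConstant.isClopen_preimage (hf : IsLocallyConstant f) (s : Set R) :
    IsClopen (f ⁻¹' s) :=
  ⟨isOpen_compl_iff.1 (hf sᶜ), hf s⟩

variable [Zero R]

lemma IsLocallyConstant.finite_range_of_hasCompactSupport (hf : IsLocallyConstant f)
    (hfc : HasCompactSupport f) : (range f).Finite := by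
  have : CompactSpace (tsupport f) := isCompact_iff_compactSpace.1 hfc.isCompact
  have himage : (f '' tsupport f).Finite := by
    rw [image_eq_range]
    exact (hf.comp_continuous continuous_subtype_val).range_finite
  refine (himage.insert 0).subset ?_
  rintro _ ⟨x, rfl⟩
  by_cases hx : f x = 0
  · exact .inl hx
  · exact .inr ⟨x, subset_tsupport f hx, rfl⟩

lemma IsLocallyConstant.isCompact_preimage_of_zero_notMem (hf : IsLocallyConstant f)
    (hfc : HasCompactSupport f) {s : Set R} (hs : (0 : R) ∉ s) : IsCompact (f ⁻¹' s) :=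
  hfc.isCompact.of_isClosed_subset (hf.isClopen_preimage s).isClosed
    fun _ hx => subset_tsupport f fun h => hs (h ▸ hx)

end LocallyConstant

section ZeroDimensional

variable {X : Type*} [TopologicalSpace X] [LocallyCompactSpace X] [T2Space X]
  [TotallyDisconnectedSpace X]

lemma IsCompact.exists_isClopen_isCompact_between {K U : Set X} (hK : IsCompact K)
    (hU : IsOpen U) (hKU : K ⊆ U) : ∃ B, IsClopen B ∧ IsCompact B ∧ K ⊆ B ∧ B ⊆ U := by
  obtain ⟨L, hL, hKL, hLU⟩ := exists_compact_between hK hU hKU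
  have hnhds : ∀ x ∈ K, ∃ V, IsClopen V ∧ x ∈ V ∧ V ⊆ interior L := fun x hx =>
    loc_compact_Haus_tot_disc_of_zero_dim.mem_nhds_iff.1 (isOpen_interior.mem_nhds (hKL hx))
  choose V hVclopen hxV hVL using hnhds
  obtain ⟨t, hKt⟩ :=
    hK.elim_nhds_subcover' V fun x hx => (hVclopen x hx).isOpen.mem_nhds (hxV x hx)
  refine ⟨⋃ x ∈ t, V x x.2, t.finite_toSet.isClopen_biUnion fun x _ => hVclopen x x.2,
    t.isCompact_biUnion fun x _ => ?_, hKt, iUnion₂_subset fun x _ => ?_⟩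
  · exact hL.of_isClosed_subset (hVclopen x x.2).isClosed ((hVL x x.2).trans interior_subset)
  · exact (hVL x x.2).trans (interior_subset.trans hLU)

lemma exists_isClopen_isCompact_preimage_val_eq (Z : Set X) {A : Set Z} (hAc : IsCompact A)
    (hAo : IsOpen A) : ∃ B : Set X, IsClopen B ∧ IsCompact B ∧ (↑) ⁻¹' B = A := by
  obtain ⟨U, hU, rfl⟩ := isOpen_induced_iff.1 hAo
  obtain ⟨B, hBclopen, hBc, hAB, hBU⟩ :=
    (hAc.image continuous_subtype_val).exists_isClopen_isCompact_between hU
      (image_preimage_subset _ _)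
  exact ⟨B, hBclopen, hBc, (preimage_mono hBU).antisymm (image_subset_iff.1 hAB)⟩

end ZeroDimensional

theorem stmt2_general {X : Type*} [TopologicalSpace X] [LocallyCompactSpace X] [T2Space X]
    [TotallyDisconnectedSpace X] (Z : Set X)
    (R : Type*) [CommRing R]
    (f : Z → R) (hf : IsLocallyConstant f) (hfc : HasCompactSupport f) :
    ∃ g : X → R, IsLocallyConstant g ∧ HasCompactSupport g ∧ ∀ z : Z, g z = f z := by
  choose B hBclopen hBc hBfiber using fun c : R =>
    exists_isClopen_isCompact_preimage_val_eq Z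
      (hf.isCompact_preimage_of_zero_notMem hfc (s := {c} \ {0}) fun h => h.2 rfl)
      (hf.isClopen_preimage ({c} \ {0})).isOpen
  let s := (hf.finite_range_of_hasCompactSupport hfc).toFinset
  let g : LocallyConstant X R := ∑ c ∈ s, (LocallyConstant.const X c).indicator (hBclopen c)
  have hg : ⇑g = ∑ c ∈ s, (B c).indicator (fun _ => c) :=
    map_sum LocallyConstant.coeFnAddMonoidHom _ s
  refine ⟨g, g.isLocallyConstant, ?_, fun z => ?_⟩
  · rw [hg]
    exact HasCompactSupport.finset_sum fun c _ =>
      HasCompactSupport.intro (hBc c) fun x hx => indicator_of_notMem hx _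
  · have hmem (c : R) : (z : X) ∈ B c ↔ f z = c ∧ f z ≠ 0 := by
      simpa using Set.ext_iff.1 (hBfiber c) z
    have hz : f z ∈ s := by simp [s]
    rw [hg, Finset.sum_apply, Finset.sum_eq_single_of_mem _ hz fun c _ hc =>
      indicator_of_notMem (fun h => hc ((hmem c).1 h).1.symm) _]
    by_cases hz0 : f z = 0 <;> simp [hmem, hz0]

/-- Let `X` be a locally compact Hausdorff totally disconnected space,
`Z ⊆ X` a closed subset (with the subspace topology) and `R` a commutative ring. Every
locally constant compactly supported function `f : Z → R` extends to a locally constant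
compactly supported function `g : X → R`; i.e. the restriction map
`C_c^∞(X,R) → C_c^∞(Z,R)` is surjective. -/
theorem stmt2 {X : Type*} [TopologicalSpace X] [LocallyCompactSpace X] [T2Space X]
    [TotallyDisconnectedSpace X] (Z : Set X) (hZ : IsClosed Z)
    (R : Type*) [CommRing R]
    (f : Z → R) (hf : IsLocallyConstant f) (hfc : HasCompactSupport f) :
    ∃ g : X → R, IsLocallyConstant g ∧ HasCompactSupport g ∧ ∀ z : Z, g z = f z :=
  stmt2_general Z R f hf hfc
end

section
/- Let R be a commutative ring, let m ≤ n be positive integers, let u be a unit of R, and let c_{m+1}, …, c_n be units of R. Then substituting X_i ↦ u·X_i^{-1} for 1 ≤ i ≤ m and X_i ↦ c_i for m+1 ≤ i ≤ n maps every symmetric Laurent polynomial in n variables over R to a symmetric Laurent polynomial in m variables over R, the resulting map R[X_1^{±1},…,X_n^{±1}]^{S_n} → R[X_1^{±1},…,X_m^{±1}]^{S_m} is an R-algebra homomorphism, and this homomorphism is surjective. -/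
/-!
Permuting the first `m` of the `n` source variables among themselves fixes the scalars `c_i` and
permutes the target variables in the same way, so symmetric Laurent polynomials go to symmetric
ones.

For surjectivity, symmetric Laurent polynomials in `m` variables are spanned by the orbit sums
`m_l = ∑_{w ∈ S_m · l} X^w`. Substituting into the orbit sum of `(-l, 0, …, 0) ∈ ℤ^n` gives
`u^{-∑ l_i} m_l` plus a symmetric remainder all of whose exponents `x` have strictly smaller
weight `∑ |x_i|`: the exponent `x` comes from the first `m` entries of a permutation of
`(-l, 0, …, 0)`, and has the full weight `∑ |l_i|` only if no nonzero entry of `l` was moved into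
the last `n - m` positions. Induction on this weight concludes.
-/

open Finset

/-- The additive map on exponents underlying the substitution
`X_i ↦ u·X_i⁻¹ (i < m)`, `X_i ↦ c_i (m ≤ i)`: it sends an exponent vector
`v : Fin n → ℤ` to the exponent vector `i ↦ -v i` on the first `m` variables. -/
def laurentExpHom (n m : ℕ) (h : m ≤ n) : (Fin n → ℤ) →+ (Fin m → ℤ) where
  toFun v := fun i => -v (Fin.castLE h i)
  map_zero' := by funext i; simp
  map_add' v w := by funext i; exact neg_add _ _

/-- The unit-valued character underlying the substitution: the monomial `X^v` picks up
the scalar `u^(Σ_{i<m} v i) · Π_{m ≤ i} c_i^(v i)`. -/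
def laurentCharHom {R : Type*} [CommRing R] (n m : ℕ) (h : m ≤ n) (u : Rˣ)
    (c : Fin n → Rˣ) : Multiplicative (Fin n → ℤ) →* Rˣ :=
  MonoidHom.mk' (fun v => u ^ (∑ i : Fin m, Multiplicative.toAdd v (Fin.castLE h i)) *
    ∏ i : Fin n, (if m ≤ (i : ℕ) then c i ^ (Multiplicative.toAdd v i) else 1)) <| by
    intro v w
    have h1 : ∀ i : Fin n,
        (if m ≤ (i : ℕ) then c i ^ (Multiplicative.toAdd (v * w) i) else 1) =
          (if m ≤ (i : ℕ) then c i ^ (Multiplicative.toAdd v i) else 1) *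
            (if m ≤ (i : ℕ) then c i ^ (Multiplicative.toAdd w i) else 1) := by
      intro i
      by_cases hi : m ≤ (i : ℕ) <;> simp [hi, toAdd_mul, zpow_add]
    have h2 : (∑ i : Fin m, Multiplicative.toAdd (v * w) (Fin.castLE h i)) =
        (∑ i : Fin m, Multiplicative.toAdd v (Fin.castLE h i)) +
          (∑ i : Fin m, Multiplicative.toAdd w (Fin.castLE h i)) := by
      rw [← Finset.sum_add_distrib]
      simp [toAdd_mul]
    rw [h2, zpow_add, Finset.prod_congr rfl (fun i _ => h1 i), Finset.prod_mul_distrib]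
    exact mul_mul_mul_comm _ _ _ _


/-- The substitution `X_i ↦ u·X_i⁻¹ (1 ≤ i ≤ m)`, `X_i ↦ c_i (m < i ≤ n)`, on the level
of monomials. -/
noncomputable def laurentMonHom {R : Type*} [CommRing R] (n m : ℕ) (h : m ≤ n) (u : Rˣ)
    (c : Fin n → Rˣ) : Multiplicative (Fin n → ℤ) →* AddMonoidAlgebra R (Fin m → ℤ) where
  toFun v := AddMonoidAlgebra.single (laurentExpHom n m h (Multiplicative.toAdd v))
      ((laurentCharHom n m h u c v : Rˣ) : R)
  map_one' := by
    simp [AddMonoidAlgebra.one_def]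
  map_mul' v w := by
    rw [AddMonoidAlgebra.single_mul_single, ← Units.val_mul, ← map_mul, ← map_add]
    rfl

/-- The substitution `X_i ↦ u·X_i⁻¹ (1 ≤ i ≤ m)`, `X_i ↦ c_i (m < i ≤ n)`, as an
`R`-algebra homomorphism between Laurent polynomial rings
`R[X_1^{±1},…,X_n^{±1}] → R[X_1^{±1},…,X_m^{±1}]` (realized as group algebras of `ℤ^n`
resp. `ℤ^m`). -/
noncomputable def laurentSubst {R : Type*} [CommRing R] (n m : ℕ) (h : m ≤ n) (u : Rˣ)
    (c : Fin n → Rˣ) :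
    AddMonoidAlgebra R (Fin n → ℤ) →ₐ[R] AddMonoidAlgebra R (Fin m → ℤ) :=
  AddMonoidAlgebra.lift R (AddMonoidAlgebra R (Fin m → ℤ)) (Fin n → ℤ)
    (laurentMonHom n m h u c)

/-- A Laurent polynomial in `n` variables is symmetric if it is invariant under all
permutations of the variables. -/
def IsSymmLaurent {R : Type*} [CommRing R] {n : ℕ}
    (p : AddMonoidAlgebra R (Fin n → ℤ)) : Prop :=
  ∀ τ : Equiv.Perm (Fin n), Finsupp.equivMapDomain (Equiv.arrowCongr τ (Equiv.refl ℤ)) p.coeff = p.coeff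

open Equiv

section Orbit

theorem card_fiber_eq_count {α β : Type*} [Fintype α] [DecidableEq β] (w : α → β) (b : β) :
    Fintype.card {a // w a = b} = (univ.val.map w).count b := by
  rw [Multiset.count_map, Fintype.card_subtype]
  simp only [eq_comm (a := b)]
  rfl

variable {α β : Type*} [Fintype α] [DecidableEq α] [DecidableEq β]

def permOrbit (l : α → β) : Finset (α → β) :=
  univ.image fun σ : Perm α => l ∘ σ

theorem mem_permOrbit {l w : α → β} : w ∈ permOrbit l ↔ ∃ σ : Perm α, l ∘ σ = w := by
  simp [permOrbit]

theorem self_mem_permOrbit (l : α → β) : l ∈ permOrbit l :=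
  mem_permOrbit.2 ⟨1, rfl⟩

theorem comp_mem_permOrbit_iff {l w : α → β} (τ : Perm α) :
    w ∘ τ ∈ permOrbit l ↔ w ∈ permOrbit l := by
  simp only [mem_permOrbit]
  constructor
  · rintro ⟨σ, hσ⟩
    exact ⟨σ * τ⁻¹, by rw [Perm.coe_mul, ← Function.comp_assoc, hσ]; ext; simp⟩
  · rintro ⟨σ, rfl⟩
    exact ⟨σ * τ, rfl⟩

theorem mem_permOrbit_iff_map_univ {l w : α → β} :
    w ∈ permOrbit l ↔ univ.val.map w = univ.val.map l := by
  constructor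
  · intro hw
    obtain ⟨σ, rfl⟩ := mem_permOrbit.1 hw
    rw [← Multiset.map_map, Multiset.map_univ_val_equiv]
  · intro h
    let e : ∀ b, {a // w a = b} ≃ {a // l a = b} := fun b =>
      Fintype.equivOfCardEq (by rw [card_fiber_eq_count, card_fiber_eq_count, h])
    exact mem_permOrbit.2 ⟨ofFiberEquiv e, funext (ofFiberEquiv_map e)⟩

theorem sum_of_mem_permOrbit {M : Type*} [AddCommMonoid M] {l w : α → M} [DecidableEq M]
    (hw : w ∈ permOrbit l) : ∑ i, w i = ∑ i, l i := by
  obtain ⟨σ, rfl⟩ := mem_permOrbit.1 hw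
  exact Equiv.sum_comp σ l

theorem neg_mem_permOrbit_neg {G : Type*} [InvolutiveNeg G] [DecidableEq G] {l w : α → G} :
    -w ∈ permOrbit (-l) ↔ w ∈ permOrbit l := by
  simp only [mem_permOrbit]
  exact exists_congr fun σ => neg_inj (a := l ∘ σ)

theorem append_mem_permOrbit_append_iff {m k : ℕ} {y z : Fin m → β} (t : Fin k → β) :
    Fin.append y t ∈ permOrbit (Fin.append z t) ↔ y ∈ permOrbit z := by
  simp only [mem_permOrbit_iff_map_univ, Fin.univ_val_map, List.ofFn_fin_append,
    ← Multiset.coe_add, add_left_inj, Multiset.coe_eq_coe]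

end Orbit

section Symmetric

variable {R : Type*} [CommRing R]

noncomputable def permLaurent {k : ℕ} (τ : Perm (Fin k)) :
    AddMonoidAlgebra R (Fin k → ℤ) ≃ₐ[R] AddMonoidAlgebra R (Fin k → ℤ) :=
  AddMonoidAlgebra.domCongr R R (AddEquiv.arrowCongr τ (AddEquiv.refl ℤ))

theorem permLaurent_single {k : ℕ} (τ : Perm (Fin k)) (v : Fin k → ℤ) (r : R) :
    permLaurent τ (AddMonoidAlgebra.single v r) = AddMonoidAlgebra.single (v ∘ τ.symm) r :=
  AddMonoidAlgebra.domCongr_single _ _ _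

theorem coeff_permLaurent {k : ℕ} (τ : Perm (Fin k)) (p : AddMonoidAlgebra R (Fin k → ℤ))
    (x : Fin k → ℤ) : (permLaurent τ p).coeff x = p.coeff (x ∘ τ) :=
  AddMonoidAlgebra.coeff_domCongr _ _ _

theorem isSymmLaurent_iff {k : ℕ} {p : AddMonoidAlgebra R (Fin k → ℤ)} :
    IsSymmLaurent p ↔ ∀ τ, permLaurent τ p = p := by
  refine forall_congr' fun τ => ?_
  rw [← AddMonoidAlgebra.coeff_injective.eq_iff]
  refine Eq.congr_left (Finsupp.ext fun x => ?_)
  rw [coeff_permLaurent, Finsupp.equivMapDomain_apply]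
  rfl

theorem IsSymmLaurent.coeff_comp {k : ℕ} {p : AddMonoidAlgebra R (Fin k → ℤ)}
    (hp : IsSymmLaurent p) (τ : Perm (Fin k)) (x : Fin k → ℤ) : p.coeff (x ∘ τ) = p.coeff x := by
  rw [← coeff_permLaurent, isSymmLaurent_iff.1 hp]

variable (R) in
noncomputable def symmetricLaurent (k : ℕ) : Subalgebra R (AddMonoidAlgebra R (Fin k → ℤ)) :=
  ⨅ τ : Perm (Fin k), AlgHom.equalizer (permLaurent τ).toAlgHom (AlgHom.id R _)

theorem mem_symmetricLaurent {k : ℕ} {p : AddMonoidAlgebra R (Fin k → ℤ)} :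
    p ∈ symmetricLaurent R k ↔ IsSymmLaurent p := by
  simp only [symmetricLaurent, Algebra.mem_iInf, AlgHom.mem_equalizer, isSymmLaurent_iff]
  rfl

end Symmetric

section Substitution

variable {R : Type*} [CommRing R] {n m : ℕ} (h : m ≤ n) (u : Rˣ) (c : Fin n → Rˣ)

theorem laurentSubst_single (v : Fin n → ℤ) (r : R) :
    laurentSubst n m h u c (AddMonoidAlgebra.single v r) =
      AddMonoidAlgebra.single (fun i => -v (Fin.castLE h i))
        (r * laurentCharHom n m h u c (.ofAdd v)) := by
  rw [laurentSubst, AddMonoidAlgebra.lift_single]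
  exact AddMonoidAlgebra.smul_single _ _ _

def extendPerm (τ : Perm (Fin m)) : Perm (Fin n) :=
  τ.extendDomain (Fin.castLEOrderIso h).toEquiv

theorem extendPerm_castLE (τ : Perm (Fin m)) (i : Fin m) :
    extendPerm h τ (Fin.castLE h i) = Fin.castLE h (τ i) :=
  τ.extendDomain_apply_image (Fin.castLEOrderIso h).toEquiv i

theorem extendPerm_of_le (τ : Perm (Fin m)) {j : Fin n} (hj : m ≤ j) : extendPerm h τ j = j :=
  τ.extendDomain_apply_not_subtype _ (not_lt.2 hj)

theorem extendPerm_symm (τ : Perm (Fin m)) : (extendPerm h τ).symm = extendPerm h τ.symm :=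
  τ.extendDomain_symm _

theorem laurentCharHom_comp_extendPerm (τ : Perm (Fin m)) (v : Fin n → ℤ) :
    laurentCharHom n m h u c (.ofAdd (v ∘ extendPerm h τ)) =
      laurentCharHom n m h u c (.ofAdd v) := by
  simp only [laurentCharHom, MonoidHom.mk'_apply, toAdd_ofAdd, Function.comp_apply,
    extendPerm_castLE]
  congr 1
  · rw [Equiv.sum_comp τ fun i => v (Fin.castLE h i)]
  · refine Finset.prod_congr rfl fun j _ => ?_
    split_ifs with hj
    · rw [extendPerm_of_le h τ hj]
    · rfl

theorem laurentSubst_permLaurent_extendPerm (τ : Perm (Fin m))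
    (p : AddMonoidAlgebra R (Fin n → ℤ)) :
    laurentSubst n m h u c (permLaurent (extendPerm h τ) p) =
      permLaurent τ (laurentSubst n m h u c p) := by
  induction p using AddMonoidAlgebra.induction_linear with
  | zero => simp only [map_zero]
  | add p q hp hq => simp only [map_add, hp, hq]
  | single v r =>
    rw [permLaurent_single, laurentSubst_single, laurentSubst_single, permLaurent_single,
      extendPerm_symm, laurentCharHom_comp_extendPerm]
    congr 1
    funext i
    simp only [Function.comp_apply, extendPerm_castLE]

end Substitution

theorem IsSymmLaurent.laurentSubst {R : Type*} [CommRing R] {n m : ℕ} (h : m ≤ n) (u : Rˣ)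
    (c : Fin n → Rˣ) {p : AddMonoidAlgebra R (Fin n → ℤ)} (hp : IsSymmLaurent p) :
    IsSymmLaurent (laurentSubst n m h u c p) :=
  isSymmLaurent_iff.2 fun τ => by
    rw [← laurentSubst_permLaurent_extendPerm, isSymmLaurent_iff.1 hp]

section OrbitSum

variable {R : Type*} [CommRing R] {k : ℕ}

variable (R) in
noncomputable def orbitSum (l : Fin k → ℤ) : AddMonoidAlgebra R (Fin k → ℤ) :=
  ∑ w ∈ permOrbit l, AddMonoidAlgebra.single w 1

theorem coeff_orbitSum (l x : Fin k → ℤ) :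
    (orbitSum R l).coeff x = if x ∈ permOrbit l then 1 else 0 := by
  simp only [orbitSum, AddMonoidAlgebra.coeff_sum, Finsupp.finsetSum_apply,
    AddMonoidAlgebra.coeff_single, Finsupp.single_apply, Finset.sum_ite_eq']

theorem isSymmLaurent_orbitSum (l : Fin k → ℤ) : IsSymmLaurent (orbitSum R l) :=
  isSymmLaurent_iff.2 fun τ => AddMonoidAlgebra.coeff_injective <| Finsupp.ext fun x => by
    simp only [coeff_permLaurent, coeff_orbitSum, comp_mem_permOrbit_iff]

theorem IsSymmLaurent.mem_of_forall_orbitSum_mem (S : Submodule R (AddMonoidAlgebra R (Fin k → ℤ)))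
    {q : AddMonoidAlgebra R (Fin k → ℤ)} (hq : IsSymmLaurent q)
    (hS : ∀ l ∈ q.coeff.support, orbitSum R l ∈ S) : q ∈ S := by
  obtain hq0 | ⟨l, hl⟩ := q.coeff.support.eq_empty_or_nonempty
  · rw [Finsupp.support_eq_empty, ← AddMonoidAlgebra.coeff_zero,
      AddMonoidAlgebra.coeff_injective.eq_iff] at hq0
    exact hq0 ▸ S.zero_mem
  set q' := q - q.coeff l • orbitSum R l with hq'
  have hq'_symm : IsSymmLaurent q' := mem_symmetricLaurent.1 <|
    sub_mem (mem_symmetricLaurent.2 hq)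
      (Subalgebra.smul_mem _ (mem_symmetricLaurent.2 (isSymmLaurent_orbitSum l)) _)
  have hsupp : q'.coeff.support ⊆ q.coeff.support.erase l := by
    intro x hx
    rw [Finsupp.mem_support_iff, hq', AddMonoidAlgebra.coeff_sub, Finsupp.sub_apply,
      AddMonoidAlgebra.coeff_smul, Finsupp.smul_apply, coeff_orbitSum, smul_eq_mul] at hx
    split_ifs at hx with hxl
    · obtain ⟨σ, rfl⟩ := mem_permOrbit.1 hxl
      exact absurd (by rw [hq.coeff_comp, mul_one, sub_self]) hx
    · rw [mul_zero, sub_zero] at hx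
      exact Finset.mem_erase.2 ⟨fun hxl' => hxl (hxl' ▸ self_mem_permOrbit l),
        Finsupp.mem_support_iff.2 hx⟩
  have : q'.coeff.support.card < q.coeff.support.card :=
    Finset.card_lt_card (hsupp.trans_ssubset (Finset.erase_ssubset hl))
  have hq'S : q' ∈ S := hq'_symm.mem_of_forall_orbitSum_mem S fun l' hl' =>
    hS l' (Finset.mem_of_mem_erase (hsupp hl'))
  rw [← sub_add_cancel q (q.coeff l • orbitSum R l)]
  exact S.add_mem hq'S (S.smul_mem _ (hS l hl))
termination_by q.coeff.support.card

end OrbitSum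

section AbsDegree

variable {α : Type*} [Fintype α]

def absDegree (x : α → ℤ) : ℕ := ∑ i, (x i).natAbs

theorem absDegree_eq_zero {x : α → ℤ} : absDegree x = 0 ↔ x = 0 := by
  simp [absDegree, Finset.sum_eq_zero_iff, funext_iff]

theorem absDegree_neg (x : α → ℤ) : absDegree (-x) = absDegree x := by
  simp only [absDegree, Pi.neg_apply, Int.natAbs_neg]

theorem absDegree_append {m k : ℕ} (a : Fin m → ℤ) (b : Fin k → ℤ) :
    absDegree (Fin.append a b) = absDegree a + absDegree b := by
  simp only [absDegree, Fin.sum_univ_add, Fin.append_left, Fin.append_right]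

theorem absDegree_of_mem_permOrbit [DecidableEq α] {l w : α → ℤ} (hw : w ∈ permOrbit l) :
    absDegree w = absDegree l := by
  obtain ⟨σ, rfl⟩ := mem_permOrbit.1 hw
  exact Equiv.sum_comp σ fun i => (l i).natAbs

theorem eq_append_zero_of_absDegree_le {m k : ℕ} {v : Fin (m + k) → ℤ}
    (hv : absDegree v ≤ absDegree (v ∘ Fin.castAdd k)) : v = Fin.append (v ∘ Fin.castAdd k) 0 := by
  have hsplit : Fin.append (v ∘ Fin.castAdd k) (fun i => v (Fin.natAdd m i)) = v :=
    Fin.append_castAdd_natAdd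
  have hdeg := absDegree_append (v ∘ Fin.castAdd k) fun i => v (Fin.natAdd m i)
  rw [hsplit] at hdeg
  have htail : (fun i => v (Fin.natAdd m i)) = 0 := absDegree_eq_zero.1 (by omega)
  conv_lhs => rw [← hsplit, htail]

end AbsDegree

section Surjectivity

variable {R : Type*} [CommRing R]

theorem coeff_laurentSubst_orbitSum {n m : ℕ} (h : m ≤ n) (u : Rˣ) (c : Fin n → Rˣ)
    (μ : Fin n → ℤ) (x : Fin m → ℤ) :
    (laurentSubst n m h u c (orbitSum R μ)).coeff x = ∑ v ∈ permOrbit μ,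
      if (fun i => -v (Fin.castLE h i)) = x then (laurentCharHom n m h u c (.ofAdd v) : R)
      else 0 := by
  simp only [orbitSum, map_sum, laurentSubst_single, one_mul, AddMonoidAlgebra.coeff_sum,
    Finsupp.finsetSum_apply, AddMonoidAlgebra.coeff_single, Finsupp.single_apply]

variable {m k : ℕ} (h : m ≤ m + k) (u : Rˣ) (c : Fin (m + k) → Rˣ)

theorem laurentCharHom_append_zero (y : Fin m → ℤ) :
    laurentCharHom (m + k) m h u c (.ofAdd (Fin.append y 0)) = u ^ ∑ i, y i := by
  have hhead (i : Fin m) : Fin.castLE h i = Fin.castAdd k i := rfl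
  simp only [laurentCharHom, MonoidHom.mk'_apply, toAdd_ofAdd, Fin.prod_univ_add, hhead,
    Fin.append_left, Fin.append_right, Pi.zero_apply, zpow_zero, ite_self, Fin.val_castAdd,
    Finset.prod_const_one, mul_one]
  rw [Finset.prod_eq_one fun i _ => if_neg (not_le.2 i.is_lt), mul_one]

theorem coeff_laurentSubst_orbitSum_append_zero (l x : Fin m → ℤ)
    (hx : absDegree l ≤ absDegree x) :
    (laurentSubst (m + k) m h u c (orbitSum R (Fin.append (-l) 0))).coeff x =
      if x ∈ permOrbit l then ((u ^ (-∑ i, l i) : Rˣ) : R) else 0 := by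
  have hsubst : ∀ v ∈ permOrbit (Fin.append (-l) 0),
      (fun i => -v (Fin.castLE h i)) = x ↔ v = Fin.append (-x) 0 := by
    intro v hv
    constructor
    · intro hvx
      have hhead : v ∘ Fin.castAdd k = -x := by rw [← hvx]; funext i; exact (neg_neg _).symm
      have hdeg : absDegree v ≤ absDegree (v ∘ Fin.castAdd k) := by
        rw [absDegree_of_mem_permOrbit hv, absDegree_append, hhead, absDegree_neg, absDegree_neg,
          absDegree_eq_zero.2 rfl, add_zero]
        exact hx
      rw [eq_append_zero_of_absDegree_le hdeg, hhead]
    · rintro rfl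
      funext i
      exact (congrArg Neg.neg (Fin.append_left (-x) 0 i)).trans (neg_neg (x i))
  rw [coeff_laurentSubst_orbitSum,
    Finset.sum_congr rfl fun v hv => if_congr (hsubst v hv) rfl rfl, Finset.sum_ite_eq']
  simp only [append_mem_permOrbit_append_iff, neg_mem_permOrbit_neg]
  split_ifs with hxl
  · rw [laurentCharHom_append_zero, ← sum_of_mem_permOrbit hxl, ← Finset.sum_neg_distrib]
    rfl
  · rfl

theorem orbitSum_mem_map_laurentSubst (l : Fin m → ℤ) :
    orbitSum R l ∈ (symmetricLaurent R (m + k)).map (laurentSubst (m + k) m h u c) := by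
  set T := (symmetricLaurent R (m + k)).map (laurentSubst (m + k) m h u c)
  set r := laurentSubst (m + k) m h u c (orbitSum R (Fin.append (-l) 0))
  have hr : r ∈ T :=
    Subalgebra.mem_map.2 ⟨_, mem_symmetricLaurent.2 (isSymmLaurent_orbitSum _), rfl⟩
  set rem := r - ((u ^ (-∑ i, l i) : Rˣ) : R) • orbitSum R l with hrem
  have hrem_symm : IsSymmLaurent rem := mem_symmetricLaurent.1 <|
    sub_mem (mem_symmetricLaurent.2 ((isSymmLaurent_orbitSum _).laurentSubst h u c))
      (Subalgebra.smul_mem _ (mem_symmetricLaurent.2 (isSymmLaurent_orbitSum l)) _)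
  have hrem_lt : ∀ x ∈ rem.coeff.support, absDegree x < absDegree l := by
    intro x hx
    by_contra! hle
    refine Finsupp.mem_support_iff.1 hx ?_
    rw [hrem, AddMonoidAlgebra.coeff_sub, Finsupp.sub_apply, AddMonoidAlgebra.coeff_smul,
      Finsupp.smul_apply, coeff_orbitSum, coeff_laurentSubst_orbitSum_append_zero h u c l x hle]
    split_ifs <;> simp
  have hrem_mem : rem ∈ T := hrem_symm.mem_of_forall_orbitSum_mem T.toSubmodule fun x hx =>
    have := hrem_lt x hx
    orbitSum_mem_map_laurentSubst x
  have hl : orbitSum R l = ((u ^ ∑ i, l i : Rˣ) : R) • (r - rem) := by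
    rw [sub_sub_cancel, smul_smul, ← Units.val_mul, ← zpow_add, add_neg_cancel, zpow_zero,
      Units.val_one, one_smul]
  rw [hl]
  exact Subalgebra.smul_mem _ (sub_mem hr hrem_mem) _
termination_by absDegree l

end Surjectivity

theorem stmt7_general {R : Type*} [CommRing R] (n m : ℕ) (hmn : m ≤ n)
    (u : Rˣ) (c : Fin n → Rˣ) :
    (∀ p : AddMonoidAlgebra R (Fin n → ℤ), IsSymmLaurent p →
      IsSymmLaurent (laurentSubst n m hmn u c p)) ∧
    (∀ q : AddMonoidAlgebra R (Fin m → ℤ), IsSymmLaurent q →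
      ∃ p : AddMonoidAlgebra R (Fin n → ℤ), IsSymmLaurent p ∧
        laurentSubst n m hmn u c p = q) := by
  refine ⟨fun p hp => hp.laurentSubst hmn u c, fun q hq => ?_⟩
  obtain ⟨k, rfl⟩ := Nat.exists_eq_add_of_le hmn
  let T := (symmetricLaurent R (m + k)).map (laurentSubst (m + k) m hmn u c)
  have hq_mem : q ∈ T := hq.mem_of_forall_orbitSum_mem T.toSubmodule fun l _ =>
    orbitSum_mem_map_laurentSubst hmn u c l
  obtain ⟨p, hp, hpq⟩ := Subalgebra.mem_map.1 hq_mem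
  exact ⟨p, mem_symmetricLaurent.1 hp, hpq⟩

/-- Let `R` be a commutative ring, `m ≤ n` positive integers, `u` a unit
of `R` and `c_i` units of `R` (for `m < i ≤ n`). Then the substitution
`X_i ↦ u·X_i⁻¹ (1 ≤ i ≤ m)`, `X_i ↦ c_i (m < i ≤ n)` — which is an `R`-algebra
homomorphism between Laurent polynomial rings — maps every symmetric Laurent polynomial
in `n` variables to a symmetric Laurent polynomial in `m` variables, and the resulting
`R`-algebra homomorphism `R[X^{±1}]^{S_n} → R[X^{±1}]^{S_m}` is surjective. -/
theorem stmt7 {R : Type*} [CommRing R] (n m : ℕ) (hm : 0 < m) (hmn : m ≤ n)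
    (u : Rˣ) (c : Fin n → Rˣ) :
    (∀ p : AddMonoidAlgebra R (Fin n → ℤ), IsSymmLaurent p →
      IsSymmLaurent (laurentSubst n m hmn u c p)) ∧
    (∀ q : AddMonoidAlgebra R (Fin m → ℤ), IsSymmLaurent q →
      ∃ p : AddMonoidAlgebra R (Fin n → ℤ), IsSymmLaurent p ∧
        laurentSubst n m hmn u c p = q) :=
  stmt7_general n m hmn u c
end

section
/- Let p be a prime number and let M be an abelian group on which multiplication by p is bijective (equivalently, M is a module over ℤ[1/p]). Then M = 0 if and only if for every prime number ℓ ≠ p the tensor product M ⊗_ℤ W(𝔽̄_ℓ) is zero, where W(𝔽̄_ℓ) denotes the ring of p-typical Witt vectors with coefficients in an algebraic closure of the field with ℓ elements (i.e., WittVector ℓ (AlgebraicClosure (ZMod ℓ))). -/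
/-!
The ring `W(𝔽̄_ℓ)` is a domain of characteristic zero, hence flat over `ℤ`. A nonzero `x ∈ M`
generates a copy of `ℤ/n`, where `n` is the additive order of `x` (`n = 0` for infinite order).
Choose a prime `ℓ ≠ p` dividing `n`: any prime if `n = 0`, otherwise a prime factor of `n`,
which cannot be `p` because multiplication by `p` is injective on `M`. Flatness embeds
`ℤ/n ⊗ W(𝔽̄_ℓ)` into `M ⊗ W(𝔽̄_ℓ)`, and `ℤ/n ⊗ W(𝔽̄_ℓ)` maps onto `𝔽̄_ℓ`, so it is nonzero.
-/
open TensorProduct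

namespace WittVector

variable {p : ℕ} [hp : Fact p.Prime] {R : Type*} [CommRing R] [IsDomain R] [CharP R p]

theorem charZero : CharZero (WittVector p R) := by
  obtain ⟨c, hc⟩ := CharP.exists (WittVector p R)
  rcases CharP.char_is_prime_or_zero (WittVector p R) c with hprime | rfl
  · have hpc : p = c := (Nat.prime_dvd_prime_iff_eq hp.out hprime).mp
      (CharP.dvd_of_ringHom (constantCoeff : WittVector p R →+* R) c p)
    exact absurd (hpc ▸ CharP.cast_eq_zero (WittVector p R) c) (p_nonzero p R)
  · exact CharP.charP_to_charZero (WittVector p R)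

theorem flat_int : Module.Flat ℤ (WittVector p R) :=
  have := charZero (p := p) (R := R)
  inferInstance

end WittVector

theorem injective_zmodLift_addOrderOf {M : Type*} [AddCommGroup M] (x : M) :
    Function.Injective (ZMod.lift (addOrderOf x)
      ⟨zmultiplesHom M x, by simp [addOrderOf_nsmul_eq_zero]⟩).toIntLinearMap := by
  rw [injective_iff_map_eq_zero]
  intro a ha
  obtain ⟨m, rfl⟩ := ZMod.intCast_surjective a
  rw [AddMonoidHom.coe_toIntLinearMap, ZMod.lift_coe, zmultiplesHom_apply] at ha
  exact (ZMod.intCast_zmod_eq_zero_iff_dvd m _).mpr (addOrderOf_dvd_iff_zsmul_eq_zero.mpr ha)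

theorem nontrivial_zmod_tensor_of_dvd {ℓ n : ℕ} {A K : Type*} [CommRing A] [CommRing K]
    [Nontrivial K] [CharP K ℓ] (f : A →+* K) (h : ℓ ∣ n) : Nontrivial (ZMod n ⊗[ℤ] A) :=
  (Algebra.TensorProduct.productMap (ZMod.castHom h K).toIntAlgHom
    f.toIntAlgHom).toRingHom.domain_nontrivial

theorem exists_prime_ne_dvd_addOrderOf {M : Type*} [AddCommGroup M] {p : ℕ}
    (hp : Function.Injective (fun x : M => p • x)) {x : M} (hx : x ≠ 0) :
    ∃ ℓ, ℓ.Prime ∧ ℓ ≠ p ∧ ℓ ∣ addOrderOf x := by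
  by_cases hn : addOrderOf x = 0
  · obtain ⟨ℓ, hpℓ, hℓ⟩ := Nat.exists_infinite_primes (p + 1)
    exact ⟨ℓ, hℓ, by omega, hn ▸ dvd_zero ℓ⟩
  have hn1 : addOrderOf x ≠ 1 := fun h => hx (AddMonoid.addOrderOf_eq_one_iff.mp h)
  refine ⟨_, Nat.minFac_prime hn1, fun hℓp => ?_, Nat.minFac_dvd _⟩
  obtain ⟨m, hm⟩ := hℓp ▸ Nat.minFac_dvd (addOrderOf x)
  have hp1 : 1 < p := hℓp ▸ (Nat.minFac_prime hn1).one_lt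
  have hm0 : m ≠ 0 := by rintro rfl; exact hn (by simpa using hm)
  have hlt : m < addOrderOf x := hm ▸ lt_mul_left (Nat.pos_of_ne_zero hm0) hp1
  refine nsmul_ne_zero_of_lt_addOrderOf hm0 hlt (hp ?_)
  simp only [smul_smul, ← hm, addOrderOf_nsmul_eq_zero, smul_zero]

theorem nontrivial_tensor_of_dvd_addOrderOf {ℓ : ℕ} {M A K : Type*} [AddCommGroup M]
    [CommRing A] [Module.Flat ℤ A] [CommRing K] [Nontrivial K] [CharP K ℓ] (f : A →+* K)
    {x : M} (h : ℓ ∣ addOrderOf x) : Nontrivial (M ⊗[ℤ] A) :=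
  have := nontrivial_zmod_tensor_of_dvd f h
  (Module.Flat.rTensor_preserves_injective_linearMap _
    (injective_zmodLift_addOrderOf x)).nontrivial

theorem stmt8_general (p : ℕ) (M : Type*) [AddCommGroup M]
    (hdiv : Function.Bijective (fun x : M => p • x)) :
    Subsingleton M ↔
      ∀ (ℓ : ℕ) [Fact ℓ.Prime], ℓ ≠ p →
        Subsingleton
          (TensorProduct ℤ M (WittVector ℓ (AlgebraicClosure (ZMod ℓ)))) := by
  refine ⟨fun _ _ _ _ => inferInstance, fun h => ?_⟩
  by_contra hM
  have := not_subsingleton_iff_nontrivial.mp hM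
  obtain ⟨x, hx⟩ := exists_ne (0 : M)
  obtain ⟨ℓ, hℓ, hℓp, hdvd⟩ := exists_prime_ne_dvd_addOrderOf hdiv.injective hx
  have : Fact ℓ.Prime := ⟨hℓ⟩
  have := WittVector.flat_int (p := ℓ) (R := AlgebraicClosure (ZMod ℓ))
  exact not_nontrivial_iff_subsingleton.mpr (h ℓ hℓp)
    (nontrivial_tensor_of_dvd_addOrderOf WittVector.constantCoeff hdvd)

/-- Let `p` be a prime and `M` an abelian group on which multiplication
by `p` is bijective (i.e. `M` is a `ℤ[1/p]`-module). Then `M = 0` if and only if for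
every prime `ℓ ≠ p` the tensor product `M ⊗_ℤ W(𝔽̄_ℓ)` vanishes, where `W(𝔽̄_ℓ)` is the
ring of Witt vectors with coefficients in an algebraic closure of `𝔽_ℓ`. -/
theorem stmt8 (p : ℕ) (hp : p.Prime) (M : Type*) [AddCommGroup M]
    (hdiv : Function.Bijective (fun x : M => p • x)) :
    Subsingleton M ↔
      ∀ (ℓ : ℕ) [Fact ℓ.Prime], ℓ ≠ p →
        Subsingleton
          (TensorProduct ℤ M (WittVector ℓ (AlgebraicClosure (ZMod ℓ)))) :=
  stmt8_general p M hdiv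
end

section
/- Let R be a commutative ring, q a natural number, m ≤ n positive integers, λ a unit of R, and D an invertible (n−m)×(n−m) matrix over R. Suppose F and σ are invertible m×m matrices over R satisfying F σ F⁻¹ = σ^q. Define the n×n block matrices F' = fromBlocks(λ·ᵗF⁻¹, 0; 0, D) and σ' = fromBlocks(ᵗσ⁻¹, 0; 0, I_{n−m}), where ᵗA denotes transpose. Then: (i) F' and σ' are invertible and F' σ' F'⁻¹ = σ'^q; (ii) for every invertible m×m matrix g over R, the matrices obtained by applying this construction to the pair (g F g⁻¹, g σ g⁻¹) equal (c F' c⁻¹, c σ' c⁻¹), where c = fromBlocks(ᵗg⁻¹, 0; 0, I_{n−m}). -/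
open Matrix

section Helpers
variable {R : Type*} [CommRing R] {m k : ℕ}

lemma blk_pow (A : Matrix (Fin m) (Fin m) R) (B : Matrix (Fin k) (Fin k) R) (q : ℕ) :
    (fromBlocks A 0 0 B) ^ q = fromBlocks (A ^ q) 0 0 (B ^ q) := by
  induction q with
  | zero => simp [Matrix.fromBlocks_one]
  | succ n ih => rw [pow_succ, pow_succ, pow_succ, ih, fromBlocks_multiply]; simp

lemma blk_inv {A : Matrix (Fin m) (Fin m) R} {B : Matrix (Fin k) (Fin k) R}
    (hA : IsUnit A) (hB : IsUnit B) :
    (fromBlocks A 0 0 B)⁻¹ = fromBlocks A⁻¹ 0 0 B⁻¹ := by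
  apply inv_eq_right_inv
  rw [fromBlocks_multiply]
  simp [Matrix.mul_nonsing_inv _ ((Matrix.isUnit_iff_isUnit_det _).mp hA),
    Matrix.mul_nonsing_inv _ ((Matrix.isUnit_iff_isUnit_det _).mp hB),
    Matrix.fromBlocks_one]

lemma blk_isUnit {A : Matrix (Fin m) (Fin m) R} {B : Matrix (Fin k) (Fin k) R}
    (hA : IsUnit A) (hB : IsUnit B) : IsUnit (fromBlocks A 0 0 B) := by
  rw [Matrix.isUnit_iff_isUnit_det, Matrix.det_fromBlocks_zero₂₁]
  exact ((Matrix.isUnit_iff_isUnit_det _).mp hA).mul ((Matrix.isUnit_iff_isUnit_det _).mp hB)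

lemma smulMat_inv (u : Rˣ) {A : Matrix (Fin m) (Fin m) R} (hA : IsUnit A) :
    ((u : R) • A)⁻¹ = ((u⁻¹ : Rˣ) : R) • A⁻¹ := by
  apply inv_eq_right_inv
  rw [smul_mul_smul_comm, Matrix.mul_nonsing_inv _ ((Matrix.isUnit_iff_isUnit_det _).mp hA)]
  norm_cast
  simp

end Helpers

/-- Let `R` be a commutative ring, `q : ℕ`, `m ≤ n` positive, `λ ∈ Rˣ`
and `D` an invertible `(n-m) × (n-m)` matrix. If `F, σ` are invertible `m × m` matrices
with `F σ F⁻¹ = σ ^ q`, then setting `F' = fromBlocks (λ • ᵗF⁻¹) 0 0 D` and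
`σ' = fromBlocks ᵗσ⁻¹ 0 0 1`: (i) `F'`, `σ'` are invertible and `F' σ' F'⁻¹ = σ' ^ q`;
(ii) for every invertible `m × m` matrix `g`, the construction applied to
`(g F g⁻¹, g σ g⁻¹)` yields `(c F' c⁻¹, c σ' c⁻¹)` where `c = fromBlocks ᵗg⁻¹ 0 0 1`. -/
theorem stmt9 {R : Type*} [CommRing R] (q n m : ℕ) (hm : 0 < m) (hmn : m ≤ n)
    (lam : Rˣ) (D : Matrix (Fin (n - m)) (Fin (n - m)) R) (hD : IsUnit D)
    (F σ : Matrix (Fin m) (Fin m) R) (hF : IsUnit F) (hσ : IsUnit σ)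
    (hrel : F * σ * F⁻¹ = σ ^ q) :
    (IsUnit (fromBlocks ((lam : R) • F⁻¹ᵀ) 0 0 D) ∧
      IsUnit (fromBlocks σ⁻¹ᵀ 0 0 (1 : Matrix (Fin (n - m)) (Fin (n - m)) R)) ∧
      fromBlocks ((lam : R) • F⁻¹ᵀ) 0 0 D * fromBlocks σ⁻¹ᵀ 0 0 1 *
          (fromBlocks ((lam : R) • F⁻¹ᵀ) 0 0 D)⁻¹ =
        (fromBlocks σ⁻¹ᵀ 0 0 (1 : Matrix (Fin (n - m)) (Fin (n - m)) R)) ^ q) ∧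
    (∀ g : Matrix (Fin m) (Fin m) R, IsUnit g →
      fromBlocks ((lam : R) • (g * F * g⁻¹)⁻¹ᵀ) 0 0 D =
          fromBlocks g⁻¹ᵀ 0 0 (1 : Matrix (Fin (n - m)) (Fin (n - m)) R) *
            fromBlocks ((lam : R) • F⁻¹ᵀ) 0 0 D *
            (fromBlocks g⁻¹ᵀ 0 0 (1 : Matrix (Fin (n - m)) (Fin (n - m)) R))⁻¹ ∧
        fromBlocks (g * σ * g⁻¹)⁻¹ᵀ 0 0 (1 : Matrix (Fin (n - m)) (Fin (n - m)) R) =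
          fromBlocks g⁻¹ᵀ 0 0 (1 : Matrix (Fin (n - m)) (Fin (n - m)) R) *
            fromBlocks σ⁻¹ᵀ 0 0 1 *
            (fromBlocks g⁻¹ᵀ 0 0 (1 : Matrix (Fin (n - m)) (Fin (n - m)) R))⁻¹) := by
  
  have hFd := (Matrix.isUnit_iff_isUnit_det F).mp hF
  have hσd := (Matrix.isUnit_iff_isUnit_det σ).mp hσ
  have hFi : IsUnit (F⁻¹ᵀ) := by
    rw [Matrix.transpose_nonsing_inv, Matrix.isUnit_nonsing_inv_iff,
      Matrix.isUnit_iff_isUnit_det, Matrix.det_transpose]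
    exact hFd
  have hσi : IsUnit (σ⁻¹ᵀ) := by
    rw [Matrix.transpose_nonsing_inv, Matrix.isUnit_nonsing_inv_iff,
      Matrix.isUnit_iff_isUnit_det, Matrix.det_transpose]
    exact hσd
  have hsmul : IsUnit ((lam : R) • F⁻¹ᵀ) := by
    rw [Matrix.isUnit_iff_isUnit_det, Matrix.det_smul, Fintype.card_fin]
    exact (lam.isUnit.pow m).mul ((Matrix.isUnit_iff_isUnit_det _).mp hFi)
  -- key relation
  have hFiT : (F⁻¹ᵀ)⁻¹ = Fᵀ := by
    rw [Matrix.transpose_nonsing_inv, Matrix.nonsing_inv_nonsing_inv]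
    rw [Matrix.det_transpose]; exact hFd
  have hrel' : F⁻¹ᵀ * σ⁻¹ᵀ * Fᵀ = (σ⁻¹ᵀ) ^ q := by
    have h1 : F * σ⁻¹ * F⁻¹ = (σ⁻¹) ^ q := by
      have := congrArg (·⁻¹) hrel
      simp only [Matrix.mul_inv_rev, Matrix.nonsing_inv_nonsing_inv _ hFd] at this
      rw [← Matrix.mul_assoc] at this
      rw [this, Matrix.inv_pow']
    have := congrArg Matrix.transpose h1
    simp only [Matrix.transpose_mul, Matrix.transpose_pow, Matrix.transpose_nonsing_inv] at this
    rw [← Matrix.mul_assoc] at this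
    simp only [Matrix.transpose_nonsing_inv]
    rw [this]
  refine ⟨⟨blk_isUnit hsmul hD, blk_isUnit hσi isUnit_one, ?_⟩, ?_⟩
  · rw [blk_inv hsmul hD, smulMat_inv lam hFi, hFiT, blk_pow, fromBlocks_multiply,
      fromBlocks_multiply]
    have hDd := (Matrix.isUnit_iff_isUnit_det D).mp hD
    simp only [Matrix.mul_zero, Matrix.zero_mul, add_zero, zero_add, Matrix.mul_one, one_pow]
    rw [Matrix.mul_nonsing_inv _ hDd]
    congr 1
    simp only [Matrix.mul_smul, Matrix.smul_mul, smul_smul]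
    rw [Units.inv_mul, one_smul, hrel']
  · intro g hg
    have hgd := (Matrix.isUnit_iff_isUnit_det g).mp hg
    have hgi : IsUnit (g⁻¹ᵀ) := by
      rw [Matrix.transpose_nonsing_inv, Matrix.isUnit_nonsing_inv_iff,
        Matrix.isUnit_iff_isUnit_det, Matrix.det_transpose]
      exact hgd
    have hgiT : (g⁻¹ᵀ)⁻¹ = gᵀ := by
      rw [Matrix.transpose_nonsing_inv, Matrix.nonsing_inv_nonsing_inv]
      rw [Matrix.det_transpose]; exact hgd
    have key : ∀ A : Matrix (Fin m) (Fin m) R, (g * A * g⁻¹)⁻¹ᵀ = g⁻¹ᵀ * A⁻¹ᵀ * gᵀ := by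
      intro A
      rw [Matrix.mul_inv_rev, Matrix.mul_inv_rev, Matrix.nonsing_inv_nonsing_inv _ hgd]
      simp only [Matrix.transpose_mul]
    rw [blk_inv hgi isUnit_one, inv_one, hgiT]
    constructor
    · rw [fromBlocks_multiply, fromBlocks_multiply]
      simp only [Matrix.mul_zero, Matrix.zero_mul, add_zero, zero_add, Matrix.mul_one,
        Matrix.one_mul]
      rw [key F, Matrix.mul_smul, Matrix.smul_mul]
    · rw [fromBlocks_multiply, fromBlocks_multiply]
      simp only [Matrix.mul_zero, Matrix.zero_mul, add_zero, zero_add, Matrix.mul_one,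
        Matrix.one_mul]
      rw [key σ]
end
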